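/- Let A be a coherent acceptance set (a convex cone which is a nonempty proper monotone subset) in an ordered topological vector space X and S a traded asset. Then: (i) ρ_{A,S} is finitely valued if and only if S_T ∈ Core(A); (ii) ρ_{A,S} is continuous on X if and only if it is continuous at 0 if and only if S_T ∈ Interior(A). -/

import Mathlib

open Filter Topology

variable {X : Type*} [AddCommGroup X] [Module ℝ X] [PartialOrder X]
  [CovariantClass X X (· + ·) (· ≤ ·)] [PosSMulMono ℝ X]
  [TopologicalSpace X] [IsTopologicalAddGroup X] [ContinuousSMul ℝ X]

/-- The risk measure `ρ_{A,S}(x) = inf {m : x + (m/S₀)·S_T ∈ A}`, valued in `EReal`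
(with `inf ∅ = ⊤` and unbounded-below giving `⊥`). -/
noncomputable def rho (A : Set X) (S0 : ℝ) (ST : X) (x : X) : EReal :=
  sInf ((fun r : ℝ => (r : EReal)) '' {r : ℝ | x + (r / S0) • ST ∈ A})

/-- A set is monotone if it contains, with any element, every larger element. -/
def MonotoneSet (A : Set X) : Prop := ∀ x ∈ A, ∀ y, x ≤ y → y ∈ A

/-- An acceptance set: nonempty, proper, and monotone. -/
def AcceptanceSet (A : Set X) : Prop := A.Nonempty ∧ A ≠ Set.univ ∧ MonotoneSet A

/-- The algebraic core (algebraic interior) of a set. -/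
def algCore (A : Set X) : Set X :=
  {x | ∀ y : X, ∃ ε > 0, ∀ l : ℝ, |l| < ε → x + l • y ∈ A}

/-!
Since `A` is a monotone convex cone, the admissible amounts `{r | x + (r/S₀)·S_T ∈ A}` are upward
closed and those for `x` and `y` add up to admissible amounts for `x + y`, so `ρ` is subadditive
where it is finite. Every `x` admits some amount exactly when `S_T` absorbs every direction, i.e.
`S_T ∈ Core(A)`; the amounts are then bounded below, since otherwise `A` would contain a whole
line `x + ℝ·S_T` and, `S_T` being a core point, all of `X`. If `S_T ∈ Interior(A)` then `ρ ≤ ε`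
near `0`, and a real subadditive function that is small near `0` is continuous. Conversely,
continuity at `0` gives `ρ < S₀` near `0`, hence `h + S_T ∈ A` for all small `h`.
-/

open Pointwise

section ConvexCone

variable {E : Type*} [AddCommGroup E] [Module ℝ E] {A : Set E}

lemma zero_mem_of_smul_mem (hne : A.Nonempty) (hcone : ∀ c : ℝ, 0 ≤ c → ∀ a ∈ A, c • a ∈ A) :
    (0 : E) ∈ A := by
  obtain ⟨a, ha⟩ := hne
  simpa using hcone 0 le_rfl a ha

lemma add_mem_of_convex_of_smul_mem (hconv : Convex ℝ A)
    (hcone : ∀ c : ℝ, 0 ≤ c → ∀ a ∈ A, c • a ∈ A) {a b : E} (ha : a ∈ A) (hb : b ∈ A) :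
    a + b ∈ A := by
  have hmid := hconv ha hb (by norm_num : (0 : ℝ) ≤ 1 / 2) (by norm_num : (0 : ℝ) ≤ 1 / 2)
    (by norm_num)
  simpa [smul_add, smul_smul] using hcone 2 zero_le_two _ hmid

lemma add_inv_smul_mem_of_add_smul_mem (hcone : ∀ c : ℝ, 0 ≤ c → ∀ a ∈ A, c • a ∈ A)
    {c : ℝ} (hc : 0 < c) {v y : E} (h : v + c • y ∈ A) : y + c⁻¹ • v ∈ A := by
  have := hcone c⁻¹ (inv_nonneg.2 hc.le) _ h
  rwa [smul_add, smul_smul, inv_mul_cancel₀ hc.ne', one_smul, add_comm] at this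

lemma exists_pos_add_smul_mem_of_mem_algCore {v : E} (hv : v ∈ algCore A) (y : E) :
    ∃ a > (0 : ℝ), v + a • y ∈ A := by
  obtain ⟨ε, hε, h⟩ := hv y
  exact ⟨ε / 2, half_pos hε, h _ (by rw [abs_of_pos (half_pos hε)]; exact half_lt_self hε)⟩

lemma mem_algCore_of_forall_exists_pos (hconv : Convex ℝ A) {v : E} (hv : v ∈ A)
    (h : ∀ y, ∃ a > (0 : ℝ), v + a • y ∈ A) : v ∈ algCore A := by
  have hsegment : ∀ y, ∃ a > (0 : ℝ), ∀ l : ℝ, 0 ≤ l → l < a → v + l • y ∈ A := by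
    intro y
    obtain ⟨a, ha, hay⟩ := h y
    refine ⟨a, ha, fun l hl0 hla => ?_⟩
    have := hconv.add_smul_mem hv hay ⟨div_nonneg hl0 ha.le, (div_le_one ha).2 hla.le⟩
    rwa [smul_smul, div_mul_cancel₀ l ha.ne'] at this
  intro y
  obtain ⟨a, ha, hpos⟩ := hsegment y
  obtain ⟨b, hb, hneg⟩ := hsegment (-y)
  refine ⟨min a b, lt_min ha hb, fun l hl => ?_⟩
  rcases le_total 0 l with hl0 | hl0
  · exact hpos l hl0 ((le_abs_self l).trans_lt (hl.trans_le (min_le_left a b)))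
  · simpa using hneg (-l) (neg_nonneg.2 hl0)
      ((neg_le_abs l).trans_lt (hl.trans_le (min_le_right a b)))

lemma eq_univ_of_mem_algCore_of_forall_add_smul_mem (hconv : Convex ℝ A)
    (hcone : ∀ c : ℝ, 0 ≤ c → ∀ a ∈ A, c • a ∈ A) {v x : E} (hv : v ∈ algCore A)
    (hline : ∀ c : ℝ, x + c • v ∈ A) : A = Set.univ := by
  refine Set.eq_univ_of_forall fun z => ?_
  obtain ⟨a, ha, hza⟩ := exists_pos_add_smul_mem_of_mem_algCore hv (z - x)
  have := add_mem_of_convex_of_smul_mem hconv hcone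
    (add_inv_smul_mem_of_add_smul_mem hcone ha hza) (hline (-a⁻¹))
  convert this using 1
  rw [neg_smul]
  abel

end ConvexCone

lemma interior_subset_algCore {E : Type*} [AddCommGroup E] [Module ℝ E] [TopologicalSpace E]
    [ContinuousAdd E] [ContinuousSMul ℝ E] (A : Set E) : interior A ⊆ algCore A := by
  intro v hv y
  have hline : Tendsto (fun l : ℝ => v + l • y) (𝓝 0) (𝓝 v) := by
    have hcont : Continuous fun l : ℝ => v + l • y := by fun_prop
    simpa using hcont.tendsto 0
  obtain ⟨ε, hε, h⟩ := Metric.eventually_nhds_iff.1 (hline (isOpen_interior.mem_nhds hv))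
  exact ⟨ε, hε, fun l hl => interior_subset (h (by simpa [Real.dist_eq] using hl))⟩

lemma continuous_of_subadditive {G : Type*} [TopologicalSpace G] [AddGroup G]
    [IsTopologicalAddGroup G] {f : G → ℝ} (hadd : ∀ x y, f (x + y) ≤ f x + f y)
    (hsmall : ∀ ε > 0, ∀ᶠ h in 𝓝 0, f h ≤ ε) : Continuous f := by
  refine continuous_iff_continuousAt.2 fun x => ?_
  rw [ContinuousAt, ← map_add_left_nhds_zero x, tendsto_map'_iff, Metric.tendsto_nhds]
  intro ε hε
  have hneg : ∀ᶠ h in 𝓝 (0 : G), f (-h) ≤ ε / 2 :=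
    (continuous_neg.tendsto' (0 : G) 0 neg_zero).eventually (hsmall _ (half_pos hε))
  filter_upwards [hsmall _ (half_pos hε), hneg] with h hpos hneg
  have hright := hadd x h
  have hleft := hadd (x + h) (-h)
  rw [add_neg_cancel_right] at hleft
  rw [Function.comp_apply, Real.dist_eq, abs_lt]
  constructor <;> linarith

section RiskMeasure

variable {E : Type*} [AddCommGroup E] [Module ℝ E] {A : Set E} {S0 : ℝ} {ST : E}

def rhoSet (A : Set E) (S0 : ℝ) (ST x : E) : Set ℝ := {r : ℝ | x + (r / S0) • ST ∈ A}

lemma rho_eq_sInf_rhoSet (x : E) : rho A S0 ST x = sInf ((↑) '' rhoSet A S0 ST x) := rfl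

lemma mul_mem_rhoSet_iff (hS0 : S0 ≠ 0) {x : E} {c : ℝ} :
    c * S0 ∈ rhoSet A S0 ST x ↔ x + c • ST ∈ A := by
  rw [rhoSet, Set.mem_ofPred_eq, mul_div_cancel_right₀ c hS0]

lemma rho_ne_top_iff {x : E} : rho A S0 ST x ≠ ⊤ ↔ (rhoSet A S0 ST x).Nonempty := by
  simp [rho_eq_sInf_rhoSet, sInf_eq_top, Set.Nonempty]

lemma rho_ne_bot_of_bddBelow {x : E} (hbdd : BddBelow (rhoSet A S0 ST x)) :
    rho A S0 ST x ≠ ⊥ := by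
  obtain ⟨b, hb⟩ := hbdd
  refine ne_bot_of_le_ne_bot (EReal.coe_ne_bot b) (le_sInf ?_)
  rintro _ ⟨r, hr, rfl⟩
  exact EReal.coe_le_coe_iff.2 (hb hr)

lemma rhoSet_nonempty_of_mem_algCore (hcone : ∀ c : ℝ, 0 ≤ c → ∀ a ∈ A, c • a ∈ A)
    (hS0 : S0 ≠ 0) (hcore : ST ∈ algCore A) (x : E) : (rhoSet A S0 ST x).Nonempty := by
  obtain ⟨a, ha, hax⟩ := exists_pos_add_smul_mem_of_mem_algCore hcore x
  exact ⟨a⁻¹ * S0,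
    (mul_mem_rhoSet_iff hS0).2 (add_inv_smul_mem_of_add_smul_mem hcone ha hax)⟩

end RiskMeasure

section OrderedRiskMeasure

variable {E : Type*} [AddCommGroup E] [Module ℝ E] [PartialOrder E] [AddLeftMono E]
  [PosSMulMono ℝ E] {A : Set E} {S0 : ℝ} {ST : E}

lemma mem_rhoSet_of_le (hmono : MonotoneSet A) (hS0 : 0 ≤ S0) (hST : 0 ≤ ST) {x : E}
    {r r' : ℝ} (hrr' : r ≤ r') (hr : r ∈ rhoSet A S0 ST x) : r' ∈ rhoSet A S0 ST x := by
  refine hmono _ hr _ ?_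
  have hstep : (0 : E) ≤ ((r' - r) / S0) • ST :=
    smul_nonneg (div_nonneg (sub_nonneg.2 hrr') hS0) hST
  calc x + (r / S0) • ST ≤ x + (r / S0) • ST + ((r' - r) / S0) • ST :=
        le_add_of_nonneg_right hstep
    _ = x + (r' / S0) • ST := by rw [add_assoc, ← add_smul, ← add_div, add_sub_cancel]

lemma rhoSet_bddBelow_of_mem_algCore (hA : AcceptanceSet A) (hconv : Convex ℝ A)
    (hcone : ∀ c : ℝ, 0 ≤ c → ∀ a ∈ A, c • a ∈ A) (hS0 : 0 < S0) (hST : 0 ≤ ST)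
    (hcore : ST ∈ algCore A) (x : E) : BddBelow (rhoSet A S0 ST x) := by
  by_contra hbdd
  refine hA.2.1 (eq_univ_of_mem_algCore_of_forall_add_smul_mem hconv hcone hcore
    (x := x) fun c => ?_)
  obtain ⟨r, hr, hlt⟩ := not_bddBelow_iff.1 hbdd (c * S0)
  exact (mul_mem_rhoSet_iff hS0.ne').1 (mem_rhoSet_of_le hA.2.2 hS0.le hST hlt.le hr)

lemma mem_algCore_of_forall_rho_ne_top (hA : AcceptanceSet A) (hconv : Convex ℝ A)
    (hcone : ∀ c : ℝ, 0 ≤ c → ∀ a ∈ A, c • a ∈ A) (hS0 : 0 < S0) (hST : 0 ≤ ST)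
    (h : ∀ x, rho A S0 ST x ≠ ⊤) : ST ∈ algCore A := by
  have hSTA : ST ∈ A := hA.2.2 0 (zero_mem_of_smul_mem hA.1 hcone) ST hST
  refine mem_algCore_of_forall_exists_pos hconv hSTA fun y => ?_
  obtain ⟨r, hr⟩ := rho_ne_top_iff.1 (h y)
  have hc : 0 < max (r / S0) 1 := lt_max_of_lt_right one_pos
  have hy : y + max (r / S0) 1 • ST ∈ A := (mul_mem_rhoSet_iff hS0.ne').1
    (mem_rhoSet_of_le hA.2.2 hS0.le hST ((div_le_iff₀ hS0).1 (le_max_left _ _)) hr)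
  exact ⟨_, inv_pos.2 hc, add_inv_smul_mem_of_add_smul_mem hcone hc hy⟩

lemma forall_rho_ne_top_and_ne_bot_iff (hA : AcceptanceSet A) (hconv : Convex ℝ A)
    (hcone : ∀ c : ℝ, 0 ≤ c → ∀ a ∈ A, c • a ∈ A) (hS0 : 0 < S0) (hST : 0 ≤ ST) :
    (∀ x, rho A S0 ST x ≠ ⊤ ∧ rho A S0 ST x ≠ ⊥) ↔ ST ∈ algCore A :=
  ⟨fun h => mem_algCore_of_forall_rho_ne_top hA hconv hcone hS0 hST fun x => (h x).1,
    fun hcore x => ⟨rho_ne_top_iff.2 (rhoSet_nonempty_of_mem_algCore hcone hS0.ne' hcore x),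
      rho_ne_bot_of_bddBelow (rhoSet_bddBelow_of_mem_algCore hA hconv hcone hS0 hST hcore x)⟩⟩

noncomputable def rhoReal (A : Set E) (S0 : ℝ) (ST x : E) : ℝ := sInf (rhoSet A S0 ST x)

lemma rho_eq_coe_rhoReal (hA : AcceptanceSet A) (hconv : Convex ℝ A)
    (hcone : ∀ c : ℝ, 0 ≤ c → ∀ a ∈ A, c • a ∈ A) (hS0 : 0 < S0) (hST : 0 ≤ ST)
    (hcore : ST ∈ algCore A) (x : E) : rho A S0 ST x = rhoReal A S0 ST x :=
  (EReal.coe_strictMono.monotone.map_csInf_of_continuousAt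
    continuous_coe_real_ereal.continuousAt (rhoSet_nonempty_of_mem_algCore hcone hS0.ne' hcore x)
    (rhoSet_bddBelow_of_mem_algCore hA hconv hcone hS0 hST hcore x)).symm

lemma rhoReal_add_le (hA : AcceptanceSet A) (hconv : Convex ℝ A)
    (hcone : ∀ c : ℝ, 0 ≤ c → ∀ a ∈ A, c • a ∈ A) (hS0 : 0 < S0) (hST : 0 ≤ ST)
    (hcore : ST ∈ algCore A) (x y : E) :
    rhoReal A S0 ST (x + y) ≤ rhoReal A S0 ST x + rhoReal A S0 ST y := by
  have hne := rhoSet_nonempty_of_mem_algCore hcone hS0.ne' hcore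
  have hbdd := rhoSet_bddBelow_of_mem_algCore hA hconv hcone hS0 hST hcore
  have hsub : rhoSet A S0 ST x + rhoSet A S0 ST y ⊆ rhoSet A S0 ST (x + y) := by
    rintro _ ⟨a, ha, b, hb, rfl⟩
    have := add_mem_of_convex_of_smul_mem hconv hcone ha hb
    rwa [add_add_add_comm, ← add_smul, ← add_div] at this
  calc rhoReal A S0 ST (x + y) ≤ sInf (rhoSet A S0 ST x + rhoSet A S0 ST y) :=
        csInf_le_csInf (hbdd (x + y)) ((hne x).add (hne y)) hsub
    _ = rhoReal A S0 ST x + rhoReal A S0 ST y := csInf_add (hne x) (hbdd x) (hne y) (hbdd y)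

end OrderedRiskMeasure

lemma eventually_mem_rhoSet_nhds_zero {E : Type*} [AddCommGroup E] [Module ℝ E]
    [TopologicalSpace E] [ContinuousAdd E] [ContinuousConstSMul ℝ E] {A : Set E} {S0 : ℝ}
    {ST : E} (hcone : ∀ c : ℝ, 0 ≤ c → ∀ a ∈ A, c • a ∈ A) (hS0 : 0 < S0)
    (hint : ST ∈ interior A) {ε : ℝ} (hε : 0 < ε) :
    ∀ᶠ h in 𝓝 (0 : E), ε ∈ rhoSet A S0 ST h := by
  have ht : 0 < ε / S0 := div_pos hε hS0
  have hcont : Continuous fun h : E => ST + (ε / S0)⁻¹ • h := by fun_prop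
  have hlim : Tendsto (fun h : E => ST + (ε / S0)⁻¹ • h) (𝓝 0) (𝓝 ST) := by
    simpa using hcont.tendsto 0
  filter_upwards [hlim (mem_interior_iff_mem_nhds.1 hint)] with h hh
  simpa [rhoSet] using add_inv_smul_mem_of_add_smul_mem hcone (inv_pos.2 ht) hh

section TopologicalRiskMeasure

variable {E : Type*} [AddCommGroup E] [Module ℝ E] [PartialOrder E] [AddLeftMono E]
  [PosSMulMono ℝ E] [TopologicalSpace E] [IsTopologicalAddGroup E]
  {A : Set E} {S0 : ℝ} {ST : E}

lemma continuous_rho_of_mem_interior [ContinuousSMul ℝ E] (hA : AcceptanceSet A)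
    (hconv : Convex ℝ A) (hcone : ∀ c : ℝ, 0 ≤ c → ∀ a ∈ A, c • a ∈ A) (hS0 : 0 < S0)
    (hST : 0 ≤ ST) (hint : ST ∈ interior A) : Continuous (rho A S0 ST) := by
  have hcore := interior_subset_algCore A hint
  have hreal : Continuous (rhoReal A S0 ST) :=
    continuous_of_subadditive (rhoReal_add_le hA hconv hcone hS0 hST hcore) fun ε hε =>
      (eventually_mem_rhoSet_nhds_zero hcone hS0 hint hε).mono fun h hh =>
        csInf_le (rhoSet_bddBelow_of_mem_algCore hA hconv hcone hS0 hST hcore h) hh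
  rw [funext (rho_eq_coe_rhoReal hA hconv hcone hS0 hST hcore)]
  exact continuous_coe_real_ereal.comp hreal

lemma mem_interior_of_continuousAt_rho (hA : AcceptanceSet A)
    (hcone : ∀ c : ℝ, 0 ≤ c → ∀ a ∈ A, c • a ∈ A) (hS0 : 0 < S0) (hST : 0 ≤ ST)
    (h : ContinuousAt (rho A S0 ST) 0) : ST ∈ interior A := by
  have h0 : (0 : ℝ) ∈ rhoSet A S0 ST 0 := by
    simpa [rhoSet] using zero_mem_of_smul_mem hA.1 hcone
  have hlt : rho A S0 ST 0 < S0 :=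
    ((sInf_le ⟨0, h0, rfl⟩ : rho A S0 ST 0 ≤ (0 : ℝ))).trans_lt (EReal.coe_lt_coe_iff.2 hS0)
  have hnear : ∀ᶠ x in 𝓝 (0 : E), x + ST ∈ A := by
    filter_upwards [h (Iio_mem_nhds hlt)] with x hx
    rw [Set.mem_preimage, Set.mem_Iio, rho_eq_sInf_rhoSet, sInf_lt_iff] at hx
    obtain ⟨_, ⟨r, hr, rfl⟩, hrS0⟩ := hx
    have : S0 ∈ rhoSet A S0 ST x :=
      mem_rhoSet_of_le hA.2.2 hS0.le hST (EReal.coe_lt_coe_iff.1 hrS0).le hr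
    simpa [rhoSet, div_self hS0.ne'] using this
  rw [mem_interior_iff_mem_nhds, ← map_add_right_nhds_zero ST]
  exact hnear

end TopologicalRiskMeasure

theorem rho_coherent_finiteness_and_continuity_general (A : Set X) (S0 : ℝ) (ST : X)
    (hA : AcceptanceSet A) (hconv : Convex ℝ A)
    (hcone : ∀ c : ℝ, 0 ≤ c → ∀ a ∈ A, c • a ∈ A)
    (hS0 : 0 < S0) (hST : 0 ≤ ST) :
    ((∀ x : X, rho A S0 ST x ≠ ⊤ ∧ rho A S0 ST x ≠ ⊥) ↔ ST ∈ algCore A) ∧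
    (Continuous (rho A S0 ST) ↔ ContinuousAt (rho A S0 ST) 0) ∧
    (ContinuousAt (rho A S0 ST) 0 ↔ ST ∈ interior A) := by
  have hinterior : ContinuousAt (rho A S0 ST) 0 → ST ∈ interior A :=
    mem_interior_of_continuousAt_rho hA hcone hS0 hST
  have hcont : ST ∈ interior A → Continuous (rho A S0 ST) :=
    continuous_rho_of_mem_interior hA hconv hcone hS0 hST
  exact ⟨forall_rho_ne_top_and_ne_bot_iff hA hconv hcone hS0 hST,
    ⟨fun h => h.continuousAt, fun h => hcont (hinterior h)⟩,
    ⟨hinterior, fun h => (hcont h).continuousAt⟩⟩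

/-- for a coherent acceptance set (a monotone, nonempty, proper convex
cone): (i) ρ_{A,S} is finitely valued iff S_T ∈ Core(A); (ii) ρ_{A,S} is continuous
iff it is continuous at 0 iff S_T ∈ Interior(A). -/
theorem rho_coherent_finiteness_and_continuity (A : Set X) (S0 : ℝ) (ST : X)
    (hA : AcceptanceSet A) (hconv : Convex ℝ A)
    (hcone : ∀ c : ℝ, 0 ≤ c → ∀ a ∈ A, c • a ∈ A)
    (hS0 : 0 < S0) (hST : 0 ≤ ST) (hSTne : ST ≠ 0) :
    ((∀ x : X, rho A S0 ST x ≠ ⊤ ∧ rho A S0 ST x ≠ ⊥) ↔ ST ∈ algCore A) ∧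
    (Continuous (rho A S0 ST) ↔ ContinuousAt (rho A S0 ST) 0) ∧
    (ContinuousAt (rho A S0 ST) 0 ↔ ST ∈ interior A) :=
  rho_coherent_finiteness_and_continuity_general A S0 ST hA hconv hcone hS0 hST
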